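/- The function π^R(a) = [∑_{j=0}^{n-1} (Q(j|a,m,n)/(a+j)² − m/(ma+j)²)]^{1/2}, where Q(j|a,m,n) is the upper tail of the Beta-Binomial pmf p(x|a,m,n), satisfies π^R(a) = √((m−1)c_n/m)·a^{-1/2} + O(√a) as a → 0⁺ (with c_n = ∑_{k=1}^{n-1} 1/k), and in particular is integrable near 0. -/

import Mathlib

open Asymptotics Filter MeasureTheory

/-- The Beta-Binomial pmf `p(x | a, m, n)`. -/
noncomputable def bbinom (m n : ℕ) (a : ℝ) (x : ℕ) : ℝ :=
  (n.choose x : ℝ) * Real.Gamma ((x : ℝ) + a) *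
    Real.Gamma ((n : ℝ) - (x : ℝ) + ((m : ℝ) - 1) * a) * Real.Gamma ((m : ℝ) * a) /
    (Real.Gamma a * Real.Gamma (((m : ℝ) - 1) * a) * Real.Gamma ((n : ℝ) + (m : ℝ) * a))

/-- The upper tail `Q(j | a, m, n) = ∑_{l=j+1}^n p(l | a, m, n)`. -/
noncomputable def Qtail (m n : ℕ) (a : ℝ) (j : ℕ) : ℝ :=
  ∑ l ∈ Finset.Icc (j + 1) n, bbinom m n a l

/-- The reference prior `π^R(a | m, n)`. -/
noncomputable def piR (m n : ℕ) (a : ℝ) : ℝ :=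
  Real.sqrt (∑ j ∈ Finset.range n,
    (Qtail m n a j / (a + (j : ℝ)) ^ 2 - (m : ℝ) / ((m : ℝ) * a + (j : ℝ)) ^ 2))

/-
For `a > 0` the Gamma ratios in `p(l | a, m, n)` are rising factorials, so by the Chu–Vandermonde
identity the pmf sums to one and every tail `Q(j)` lies in `[0, 1]`: the terms `j ≥ 1` of the sum
defining `π^R(a)²` stay bounded. The term `j = 0` equals `((m-1)/m - p(0)) / a²`, where
`p(0) = (m-1)/m · ∏_{k=1}^{n-1} (1 - a/(ma+k))`, and the bounds
`1 - σ ≤ ∏ (1 - x_k) ≤ 1 - σ + σ²/2` (`σ = ∑ x_k`) give `1 - ∏ = c_n a + O(a²)`. Hence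
`π^R(a)² = K/a + O(1)` uniformly in `a > 0`, with `K = (m-1) c_n / m`, and both the expansion and
the integrability near `0` follow from `|√x - √y| ≤ |x - y| / √y`.
-/

open Polynomial Finset Topology

theorem ascPochhammer_eval_add {S : Type*} [CommSemiring S] (x y : S) (n : ℕ) :
    (ascPochhammer S n).eval (x + y) = ∑ ij ∈ antidiagonal n,
      (n.choose ij.1 : S) * ((ascPochhammer S ij.1).eval x * (ascPochhammer S ij.2).eval y) := by
  induction n with
  | zero => simp
  | succ n ih =>
    rw [sum_antidiagonal_choose_succ_mul
        (fun i j => (ascPochhammer S i).eval x * (ascPochhammer S j).eval y),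
      ascPochhammer_succ_eval, ih, sum_mul, ← sum_add_distrib]
    refine sum_congr rfl fun ij hij => ?_
    rw [HasAntidiagonal.mem_antidiagonal] at hij
    rw [← Nat.choose_symm_of_eq_add hij.symm, ascPochhammer_succ_eval, ascPochhammer_succ_eval,
      ← hij]
    push_cast
    ring

theorem ascPochhammer_eval_eq_prod_range {S : Type*} [CommSemiring S] (x : S) (n : ℕ) :
    (ascPochhammer S n).eval x = ∏ k ∈ range n, (x + k) := by
  induction n with
  | zero => simp
  | succ n ih => rw [ascPochhammer_succ_eval, ih, prod_range_succ]

theorem Real.Gamma_natCast_add {x : ℝ} (hx : 0 < x) (k : ℕ) :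
    Real.Gamma (k + x) = (ascPochhammer ℝ k).eval x * Real.Gamma x := by
  induction k with
  | zero => simp
  | succ k ih =>
    rw [Nat.cast_succ, add_right_comm, Real.Gamma_add_one (by positivity), ih,
      ascPochhammer_succ_eval]
    ring

theorem Finset.one_sub_sum_le_prod_one_sub {ι : Type*} (s : Finset ι) {x : ι → ℝ}
    (h0 : ∀ i ∈ s, 0 ≤ x i) (h1 : ∀ i ∈ s, x i ≤ 1) : 1 - ∑ i ∈ s, x i ≤ ∏ i ∈ s, (1 - x i) := by
  classical
  induction s using Finset.induction_on with
  | empty => simp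
  | insert i s hi ih =>
    rw [sum_insert hi, prod_insert hi]
    have hs := sum_nonneg fun j hj => h0 j (mem_insert_of_mem hj)
    have := ih (fun j hj => h0 j (mem_insert_of_mem hj)) (fun j hj => h1 j (mem_insert_of_mem hj))
    nlinarith [h0 i (mem_insert_self i s), h1 i (mem_insert_self i s)]

theorem Finset.prod_one_sub_le {ι : Type*} (s : Finset ι) {x : ι → ℝ}
    (h0 : ∀ i ∈ s, 0 ≤ x i) (h1 : ∀ i ∈ s, x i ≤ 1) :
    ∏ i ∈ s, (1 - x i) ≤ 1 - ∑ i ∈ s, x i + (∑ i ∈ s, x i) ^ 2 / 2 := by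
  classical
  induction s using Finset.induction_on with
  | empty => simp
  | insert i s hi ih =>
    rw [sum_insert hi, prod_insert hi]
    have := ih (fun j hj => h0 j (mem_insert_of_mem hj)) (fun j hj => h1 j (mem_insert_of_mem hj))
    have hx0 := h0 i (mem_insert_self i s)
    have hx1 := h1 i (mem_insert_self i s)
    nlinarith [mul_le_mul_of_nonneg_left this (sub_nonneg.2 hx1),
      mul_nonneg hx0 (sq_nonneg (∑ j ∈ s, x j))]

theorem abs_one_sub_prod_sub_le {μ a : ℝ} (hμ : 1 ≤ μ) (ha : 0 < a) (n : ℕ) :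
    |1 - ∏ k ∈ Ico 1 n, (1 - a / (μ * a + k)) - a * ∑ k ∈ Ico 1 n, (1 : ℝ) / k| ≤
      ((∑ k ∈ Ico 1 n, (1 : ℝ) / k) ^ 2 / 2 + μ * ∑ k ∈ Ico 1 n, (1 : ℝ) / k) * a ^ 2 := by
  set c := ∑ k ∈ Ico 1 n, (1 : ℝ) / k
  set σ := ∑ k ∈ Ico 1 n, a / (μ * a + k)
  have hx : ∀ k ∈ Ico 1 n, 0 ≤ a / (μ * a + k) ∧ a / (μ * a + k) ≤ 1 := fun k hk => by
    have hk1 : (1 : ℝ) ≤ k := by exact_mod_cast (mem_Ico.1 hk).1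
    exact ⟨by positivity, (div_le_one (by positivity)).2 (by nlinarith)⟩
  have hgap : ∀ k ∈ Ico 1 n, 0 ≤ a * (1 / k) - a / (μ * a + k) ∧
      a * (1 / k) - a / (μ * a + k) ≤ μ * a ^ 2 * (1 / k) := fun k hk => by
    have hk1 : (1 : ℝ) ≤ k := by exact_mod_cast (mem_Ico.1 hk).1
    have hdiff : a * (1 / k) - a / (μ * a + k) = μ * a ^ 2 * (1 / (k * (μ * a + k))) := by
      field_simp; ring
    rw [hdiff]
    have hμa : 0 ≤ μ * a := by positivity
    exact ⟨by positivity, by gcongr; nlinarith⟩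
  have hσ0 : 0 ≤ σ := sum_nonneg fun k hk => (hx k hk).1
  have hσ_le : σ ≤ a * c := by
    rw [← sub_nonneg, mul_sum, ← sum_sub_distrib]
    exact sum_nonneg fun k hk => (hgap k hk).1
  have hσ_ge : a * c - σ ≤ μ * a ^ 2 * c := by
    rw [mul_sum, mul_sum, ← sum_sub_distrib]
    exact sum_le_sum fun k hk => (hgap k hk).2
  have hlow := one_sub_sum_le_prod_one_sub (Ico 1 n) (fun k hk => (hx k hk).1)
    (fun k hk => (hx k hk).2)
  have hup := prod_one_sub_le (Ico 1 n) (fun k hk => (hx k hk).1) (fun k hk => (hx k hk).2)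
  have hc : 0 ≤ c := sum_nonneg fun k _ => by positivity
  rw [abs_le]
  constructor <;> nlinarith [mul_self_le_mul_self hσ0 hσ_le]

theorem Real.abs_sqrt_sub_sqrt_le {x y : ℝ} (hy : 0 < y) : |√x - √y| ≤ |x - y| / √y := by
  have hsy := Real.sqrt_pos.2 hy
  rw [le_div_iff₀ hsy]
  rcases le_or_gt 0 x with hx | hx
  · have hsum : 0 < √x + √y := by positivity
    have key : (√x - √y) * (√x + √y) = x - y := by
      linear_combination Real.sq_sqrt hx - Real.sq_sqrt hy.le
    calc |√x - √y| * √y ≤ |√x - √y| * (√x + √y) := by gcongr; linarith [Real.sqrt_nonneg x]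
      _ = |x - y| := by rw [← abs_of_pos hsum, ← abs_mul, key]
  · rw [Real.sqrt_eq_zero'.2 hx.le, zero_sub, abs_neg, abs_of_pos hsy, Real.mul_self_sqrt hy.le,
      abs_of_neg (by linarith)]
    linarith

theorem isBigO_sqrt_sub_sqrt_div {F : ℝ → ℝ} {K C : ℝ} (hK : 0 < K)
    (hF : ∀ a > 0, |F a - K / a| ≤ C) :
    (fun a => √(F a) - √K / √a) =O[𝓝[>] 0] fun a => √a := by
  refine IsBigO.of_bound (C / √K) ?_
  filter_upwards [self_mem_nhdsWithin] with a (ha : 0 < a)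
  have hKa : 0 < K / a := div_pos hK ha
  rw [Real.norm_eq_abs, Real.norm_eq_abs, abs_of_nonneg (Real.sqrt_nonneg a),
    ← Real.sqrt_div' K ha.le]
  calc |√(F a) - √(K / a)| ≤ |F a - K / a| / √(K / a) := Real.abs_sqrt_sub_sqrt_le hKa
    _ ≤ C / √(K / a) := by gcongr; exact hF a ha
    _ = C / √K * √a := by
      rw [Real.sqrt_div' K ha.le]; field_simp

theorem integrableOn_sqrt_of_abs_sub_div_le {F : ℝ → ℝ} {K C : ℝ}
    (hF : ∀ a > 0, |F a - K / a| ≤ C) (hFc : ContinuousOn F (Set.Ioo 0 1)) :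
    IntegrableOn (fun a => √(F a)) (Set.Ioo 0 1) := by
  have hC : 0 ≤ C := (abs_nonneg _).trans (hF 1 one_pos)
  have hrpow : IntegrableOn (fun a : ℝ => a ^ (-(1 / 2) : ℝ)) (Set.Ioo 0 1) :=
    (intervalIntegral.integrableOn_Ioo_rpow_iff one_pos).2 (by norm_num)
  refine (hrpow.const_mul √(K + C)).mono' (Real.continuous_sqrt.comp_continuousOn hFc
    |>.aestronglyMeasurable measurableSet_Ioo) ?_
  rw [ae_restrict_iff' measurableSet_Ioo]
  filter_upwards with a ⟨ha0, ha1⟩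
  have hFa : F a ≤ (K + C) / a := by
    rw [add_div]
    have := (abs_le.1 (hF a ha0)).2
    have : C ≤ C / a := le_div_self hC ha0 ha1.le
    linarith
  rw [Real.norm_eq_abs, abs_of_nonneg (Real.sqrt_nonneg _), Real.rpow_neg ha0.le,
    ← Real.sqrt_eq_rpow, ← div_eq_mul_inv, ← Real.sqrt_div' _ ha0.le]
  exact Real.sqrt_le_sqrt hFa

theorem abs_div_sq_sub_div_sq_le {Q μ a : ℝ} {j : ℕ} (hQ0 : 0 ≤ Q) (hQ1 : Q ≤ 1) (hμ : 0 ≤ μ)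
    (ha : 0 < a) (hj : 1 ≤ j) : |Q / (a + j) ^ 2 - μ / (μ * a + j) ^ 2| ≤ 1 + μ := by
  have hj' : (1 : ℝ) ≤ j := by exact_mod_cast hj
  have h1 : 1 ≤ (a + j) ^ 2 := by nlinarith
  have h2 : 1 ≤ (μ * a + j) ^ 2 := by nlinarith [mul_nonneg hμ ha.le]
  calc |Q / (a + j) ^ 2 - μ / (μ * a + j) ^ 2|
      ≤ |Q / (a + j) ^ 2| + |μ / (μ * a + j) ^ 2| := abs_sub _ _
    _ ≤ 1 + μ := by
      rw [abs_of_nonneg (by positivity), abs_of_nonneg (by positivity)]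
      gcongr
      · exact (div_le_self hQ0 h1).trans hQ1
      · exact div_le_self hμ h2

noncomputable def piRSq (m n : ℕ) (a : ℝ) : ℝ :=
  ∑ j ∈ Finset.range n,
    (Qtail m n a j / (a + (j : ℝ)) ^ 2 - (m : ℝ) / ((m : ℝ) * a + (j : ℝ)) ^ 2)

section BetaBinomial

variable {m n : ℕ} {a : ℝ}

theorem bbinom_eq_ascPochhammer (hm : 2 ≤ m) (ha : 0 < a) {l : ℕ} (hl : l ≤ n) :
    bbinom m n a l = n.choose l * (ascPochhammer ℝ l).eval a *
      (ascPochhammer ℝ (n - l)).eval ((m - 1) * a) / (ascPochhammer ℝ n).eval (m * a) := by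
  have hm1 : 0 < ((m : ℝ) - 1) * a := mul_pos (by norm_num; exact_mod_cast hm) ha
  have hma : 0 < (m : ℝ) * a := by positivity
  rw [bbinom, ← Nat.cast_sub hl, Real.Gamma_natCast_add ha, Real.Gamma_natCast_add hm1,
    Real.Gamma_natCast_add hma]
  have := Real.Gamma_pos_of_pos ha
  have := Real.Gamma_pos_of_pos hm1
  have := Real.Gamma_pos_of_pos hma
  field_simp

theorem bbinom_nonneg (hm : 2 ≤ m) (ha : 0 < a) {l : ℕ} (hl : l ≤ n) : 0 ≤ bbinom m n a l := by
  have hm1 : 0 < ((m : ℝ) - 1) * a := mul_pos (by norm_num; exact_mod_cast hm) ha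
  rw [bbinom_eq_ascPochhammer hm ha hl]
  have := ascPochhammer_pos l a ha
  have := ascPochhammer_pos (n - l) _ hm1
  have := ascPochhammer_pos n (m * a) (by positivity)
  positivity

theorem sum_bbinom (hm : 2 ≤ m) (ha : 0 < a) : ∑ l ∈ range (n + 1), bbinom m n a l = 1 := by
  have hP := ascPochhammer_eval_add a ((m - 1) * a) n
  rw [Nat.sum_antidiagonal_eq_sum_range_succ (fun i j => (n.choose i : ℝ) *
    ((ascPochhammer ℝ i).eval a * (ascPochhammer ℝ j).eval ((m - 1) * a)))] at hP
  have hpos := ascPochhammer_pos n (m * a) (by positivity)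
  rw [sum_congr rfl fun l hl => bbinom_eq_ascPochhammer hm ha (Nat.lt_succ_iff.1 (mem_range.1 hl)),
    ← sum_div, div_eq_one_iff_eq hpos.ne', show (m : ℝ) * a = a + (m - 1) * a by ring, hP]
  simp only [mul_assoc]

theorem Qtail_le_one (hm : 2 ≤ m) (ha : 0 < a) (j : ℕ) : Qtail m n a j ≤ 1 := by
  rw [← sum_bbinom (n := n) hm ha, Qtail]
  refine sum_le_sum_of_subset_of_nonneg (fun _ hl => ?_) fun _ hl _ => ?_
  · simp only [mem_Icc, mem_range] at hl ⊢; omega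
  · exact bbinom_nonneg hm ha (Nat.lt_succ_iff.1 (mem_range.1 hl))

theorem Qtail_nonneg (hm : 2 ≤ m) (ha : 0 < a) (j : ℕ) : 0 ≤ Qtail m n a j :=
  sum_nonneg fun _ hl => bbinom_nonneg hm ha (mem_Icc.1 hl).2

theorem Qtail_zero (hm : 2 ≤ m) (ha : 0 < a) : Qtail m n a 0 = 1 - bbinom m n a 0 := by
  rw [← sum_bbinom (n := n) hm ha, range_eq_Ico, sum_eq_sum_Ico_succ_bot n.succ_pos,
    add_sub_cancel_left, Qtail, Nat.succ_eq_add_one, Ico_add_one_right_eq_Icc]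

theorem bbinom_zero (hm : 2 ≤ m) (ha : 0 < a) (hn : 1 ≤ n) :
    bbinom m n a 0 = (m - 1) / m * ∏ k ∈ Ico 1 n, (1 - a / (m * a + k)) := by
  have hk : ∀ k ∈ Ico 1 n, 1 - a / (m * a + k) = ((m - 1) * a + k) / (m * a + k) := by
    intro k hk
    have : (0 : ℝ) < m * a + k := by have := (mem_Ico.1 hk).1; positivity
    field_simp
    ring
  have hma : (0 : ℝ) < m * a := by positivity
  rw [bbinom_eq_ascPochhammer hm ha n.zero_le, prod_congr rfl hk, prod_div_distrib]
  simp only [Nat.choose_zero_right, ascPochhammer_zero, eval_one, Nat.cast_one, one_mul,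
    Nat.sub_zero, ascPochhammer_eval_eq_prod_range, range_eq_Ico]
  rw [prod_eq_prod_Ico_succ_bot hn, prod_eq_prod_Ico_succ_bot hn]
  push_cast
  field_simp
  ring

theorem continuousOn_bbinom {l : ℕ} (hm : 2 ≤ m) (hl : l ≤ n) :
    ContinuousOn (fun a => bbinom m n a l) (Set.Ioi 0) := by
  refine ContinuousOn.congr ?_ fun a (ha : 0 < a) => bbinom_eq_ascPochhammer hm ha hl
  refine ContinuousOn.div (by fun_prop) (by fun_prop) fun a (ha : 0 < a) => ?_
  exact (ascPochhammer_pos n _ (by positivity)).ne'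

theorem continuousOn_piRSq (hm : 2 ≤ m) : ContinuousOn (piRSq m n) (Set.Ioi 0) := by
  have hQ : ∀ j, ContinuousOn (fun a => Qtail m n a j) (Set.Ioi 0) := fun j =>
    continuousOn_finsetSum _ fun l hl => continuousOn_bbinom hm (mem_Icc.1 hl).2
  refine continuousOn_finsetSum _ fun j _ => ((hQ j).div (by fun_prop) ?_).sub
    (continuousOn_const.div (by fun_prop) ?_) <;> intro a (ha : 0 < a) <;> positivity

theorem Qtail_zero_div_sq_sub (hm : 2 ≤ m) (ha : 0 < a) (hn : 1 ≤ n) :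
    Qtail m n a 0 / a ^ 2 - m / (m * a) ^ 2 =
      (m - 1) / m * ((1 - ∏ k ∈ Ico 1 n, (1 - a / (m * a + k))) / a ^ 2) := by
  rw [Qtail_zero hm ha, bbinom_zero hm ha hn]
  field_simp
  ring

theorem abs_piRSq_sub_le (hm : 2 ≤ m) (hn : 1 ≤ n) : ∃ C, ∀ a > 0,
    |piRSq m n a - ((m : ℝ) - 1) * (∑ k ∈ Ico 1 n, (1 : ℝ) / k) / m / a| ≤ C := by
  set c := ∑ k ∈ Ico 1 n, (1 : ℝ) / k
  have hm' : (1 : ℝ) ≤ m := by exact_mod_cast (by omega : 1 ≤ m)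
  refine ⟨(c ^ 2 / 2 + m * c) + ∑ j ∈ Ico 1 n, (1 + (m : ℝ)), fun a ha => ?_⟩
  have hR := abs_one_sub_prod_sub_le hm' ha n
  set R := ∏ k ∈ Ico 1 n, (1 - a / (m * a + k)) with hR_def
  have hfirst : Qtail m n a 0 / a ^ 2 - m / (m * a) ^ 2 - (m - 1) * c / m / a =
      (m - 1) / m * ((1 - R - a * c) / a ^ 2) := by
    rw [Qtail_zero_div_sq_sub hm ha hn, ← hR_def]
    field_simp
  have hfirst_le : |(m - 1) / m * ((1 - R - a * c) / a ^ 2)| ≤ c ^ 2 / 2 + m * c := by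
    have hcoef0 : (0 : ℝ) ≤ (m - 1) / m := div_nonneg (by linarith) (by positivity)
    have hcoef1 : (m - 1) / m ≤ (1 : ℝ) := by rw [div_le_one (by positivity)]; linarith
    rw [abs_mul, abs_of_nonneg hcoef0, abs_div, abs_of_pos (by positivity : (0 : ℝ) < a ^ 2)]
    exact (mul_le_of_le_one_left (by positivity) hcoef1).trans
      ((div_le_iff₀ (by positivity)).2 hR)
  have hsplit : piRSq m n a - (m - 1) * c / m / a = (m - 1) / m * ((1 - R - a * c) / a ^ 2) +
      ∑ j ∈ Ico 1 n, (Qtail m n a j / (a + j) ^ 2 - m / (m * a + j) ^ 2) := by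
    rw [piRSq, range_eq_Ico, sum_eq_sum_Ico_succ_bot (by omega), Nat.cast_zero, add_zero,
      add_zero]
    linear_combination hfirst
  rw [hsplit]
  refine (abs_add_le _ _).trans (add_le_add hfirst_le ((abs_sum_le_sum_abs _ _).trans
    (sum_le_sum fun j hj => abs_div_sq_sub_div_sq_le (Qtail_nonneg hm ha j) (Qtail_le_one hm ha j)
      (by positivity) ha (mem_Ico.1 hj).1)))

end BetaBinomial

/-- As `a → 0⁺`, `π^R(a) = √((m-1)cₙ/m) a^{-1/2} + O(√a)` with
`cₙ = ∑_{k=1}^{n-1} 1/k`; in particular `π^R` is integrable near `0`. -/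
theorem stmt11 (m n : ℕ) (hm : 2 ≤ m) (hn : 2 ≤ n) :
    ((fun a : ℝ =>
        piR m n a -
          Real.sqrt (((m : ℝ) - 1) * (∑ k ∈ Finset.Icc 1 (n - 1), (1 : ℝ) / k) / m) /
            Real.sqrt a)
      =O[nhdsWithin 0 (Set.Ioi 0)] fun a : ℝ => Real.sqrt a)
    ∧ IntegrableOn (piR m n) (Set.Ioo 0 1) := by
  rw [Icc_sub_one_right_eq_Ico_of_not_isMin (not_isMin_of_lt (by omega : 0 < n))]
  obtain ⟨C, hC⟩ := abs_piRSq_sub_le (n := n) hm (by omega)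
  have hc : (1 : ℝ) ≤ ∑ k ∈ Ico 1 n, (1 : ℝ) / k := by
    simpa using single_le_sum (f := fun k : ℕ => (1 : ℝ) / k) (fun k _ => by positivity)
      (mem_Ico.2 ⟨le_rfl, hn⟩)
  have hm' : (2 : ℝ) ≤ m := by exact_mod_cast hm
  exact ⟨isBigO_sqrt_sub_sqrt_div (div_pos (by nlinarith) (by positivity)) hC,
    integrableOn_sqrt_of_abs_sub_div_le hC ((continuousOn_piRSq hm).mono Set.Ioo_subset_Ioi_self)⟩
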